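/- arXiv:2202.02780 — 2 statements merged into one kernel-verified Lean document; each statement's English description precedes it below -/
import Mathlib

section
/- Let A, B be finite nonempty subsets of an abelian group and let θ > 0 be real. Then 2^θ·|A+B|^{θ+1} ≤ (|A|·|B|)^θ·(|A+B| + (2^θ − 1)·𝔄(A,B)), where 𝔄(A,B) is the number of elements of A+B with a unique representation as a+b. -/
/-! Write `N = |A+B|`, `U = 𝔄(A,B)` and `K = |A||B|`. Every sum has at least one representation
and the non-unique ones have at least two, so `2N - U ≤ K`. It then suffices to show
`2^θ N^(θ+1) ≤ (2N - U)^θ (N + (2^θ - 1) U)`; with `l = U / N ∈ [0, 1]` this is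
`2^θ = 2^((1-l)θ) 2^(lθ) ≤ (2 - l)^θ (1 + l (2^θ - 1))`, two instances of Bernoulli's inequality
`x^l ≤ 1 + l (x - 1)` for exponents in `[0, 1]`. -/

open scoped Pointwise

variable {G : Type*} [AddCommGroup G] [DecidableEq G]

def repCount (A B : Finset G) (x : G) : ℕ :=
  ((A ×ˢ B).filter fun ab => ab.1 + ab.2 = x).card

def uniqueRep (A B : Finset G) : ℕ :=
  ((A + B).filter fun x => repCount A B x = 1).card

def addEnergy' (A B : Finset G) : ℕ :=
  (((A ×ˢ A) ×ˢ B ×ˢ B).filter fun t => t.1.1 + t.2.1 = t.1.2 + t.2.2).card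

lemma Real.rpow_le_one_add_mul_sub_one {x l : ℝ} (hx : 0 ≤ x) (hl₀ : 0 ≤ l) (hl₁ : l ≤ 1) :
    x ^ l ≤ 1 + l * (x - 1) := by
  simpa using rpow_one_add_le_one_add_mul_self (s := x - 1) (by linarith) hl₀ hl₁

lemma two_rpow_le_two_sub_rpow_mul {θ l : ℝ} (hθ : 0 ≤ θ) (hl₀ : 0 ≤ l) (hl₁ : l ≤ 1) :
    (2 : ℝ) ^ θ ≤ (2 - l) ^ θ * (1 + l * ((2 : ℝ) ^ θ - 1)) := by
  have h₁ : ((2 : ℝ) ^ (1 - l)) ^ θ ≤ (2 - l) ^ θ := by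
    gcongr
    linarith [Real.rpow_le_one_add_mul_sub_one zero_le_two (sub_nonneg.2 hl₁) (by linarith)]
  have h₂ : ((2 : ℝ) ^ θ) ^ l ≤ 1 + l * ((2 : ℝ) ^ θ - 1) :=
    Real.rpow_le_one_add_mul_sub_one (by positivity) hl₀ hl₁
  calc (2 : ℝ) ^ θ = ((2 : ℝ) ^ (1 - l)) ^ θ * ((2 : ℝ) ^ θ) ^ l := by
        rw [← Real.rpow_mul zero_le_two, ← Real.rpow_mul zero_le_two, ← Real.rpow_add two_pos]
        ring_nf
    _ ≤ (2 - l) ^ θ * (1 + l * ((2 : ℝ) ^ θ - 1)) := by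
        gcongr
        exact Real.rpow_nonneg (by linarith) θ

lemma two_rpow_mul_rpow_add_one_le {θ n u : ℝ} (hθ : 0 ≤ θ) (hu : 0 ≤ u) (hun : u ≤ n) :
    (2 : ℝ) ^ θ * n ^ (θ + 1) ≤ (2 * n - u) ^ θ * (n + ((2 : ℝ) ^ θ - 1) * u) := by
  rcases (hu.trans hun).eq_or_lt with rfl | hn
  · obtain rfl : u = 0 := le_antisymm hun hu
    simp [Real.zero_rpow (by linarith : θ + 1 ≠ 0)]
  set l := u / n
  have hu_eq : u = l * n := (div_mul_cancel₀ u hn.ne').symm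
  have hl₁ : l ≤ 1 := (div_le_one hn).2 hun
  calc (2 : ℝ) ^ θ * n ^ (θ + 1) = (2 : ℝ) ^ θ * (n ^ θ * n) := by
        rw [Real.rpow_add_one hn.ne']
    _ ≤ (2 - l) ^ θ * (1 + l * ((2 : ℝ) ^ θ - 1)) * (n ^ θ * n) := by
        gcongr
        exact two_rpow_le_two_sub_rpow_mul hθ (by positivity) hl₁
    _ = ((2 - l) * n) ^ θ * ((1 + l * ((2 : ℝ) ^ θ - 1)) * n) := by
        rw [Real.mul_rpow (by linarith) hn.le]; ring
    _ = (2 * n - u) ^ θ * (n + ((2 : ℝ) ^ θ - 1) * u) := by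
        rw [hu_eq]; ring_nf

lemma sum_repCount (A B : Finset G) : ∑ x ∈ A + B, repCount A B x = A.card * B.card := by
  rw [← Finset.card_product]
  refine (Finset.card_eq_sum_card_fiberwise fun ab hab => ?_).symm
  obtain ⟨ha, hb⟩ := Finset.mem_product.1 hab
  exact Finset.add_mem_add ha hb

lemma repCount_pos {A B : Finset G} {x : G} (hx : x ∈ A + B) : 0 < repCount A B x := by
  obtain ⟨a, ha, b, hb, rfl⟩ := Finset.mem_add.1 hx
  exact Finset.card_pos.2 ⟨(a, b), by simp [ha, hb]⟩

lemma uniqueRep_le_card_add (A B : Finset G) : uniqueRep A B ≤ (A + B).card :=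
  Finset.card_filter_le _ _

lemma two_mul_card_add_le (A B : Finset G) :
    2 * (A + B).card ≤ A.card * B.card + uniqueRep A B := by
  rw [← sum_repCount, uniqueRep, Finset.card_filter, ← Finset.sum_add_distrib, mul_comm,
    ← smul_eq_mul, ← Finset.sum_const]
  refine Finset.sum_le_sum fun x hx => ?_
  have := repCount_pos hx
  split_ifs <;> omega

theorem stmt_8_general (A B : Finset G) (θ : ℝ) (hθ : 0 < θ) :
    (2 : ℝ) ^ θ * ((A + B).card : ℝ) ^ (θ + 1) ≤
      ((A.card : ℝ) * B.card) ^ θ *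
        (((A + B).card : ℝ) + ((2 : ℝ) ^ θ - 1) * uniqueRep A B) := by
  have hUN : (uniqueRep A B : ℝ) ≤ (A + B).card := by exact_mod_cast uniqueRep_le_card_add A B
  have hK : 2 * ((A + B).card : ℝ) - uniqueRep A B ≤ A.card * B.card := by
    have := two_mul_card_add_le A B
    rw [sub_le_iff_le_add]
    exact_mod_cast this
  calc _ ≤ _ := two_rpow_mul_rpow_add_one_le hθ.le (Nat.cast_nonneg _) hUN
    _ ≤ _ := by
        have : (1 : ℝ) ≤ 2 ^ θ := Real.one_le_rpow one_le_two hθ.le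
        gcongr
        linarith

theorem stmt_8 (A B : Finset G) (hA : A.Nonempty) (hB : B.Nonempty) (θ : ℝ) (hθ : 0 < θ) :
    (2 : ℝ) ^ θ * ((A + B).card : ℝ) ^ (θ + 1) ≤
      ((A.card : ℝ) * B.card) ^ θ *
        (((A + B).card : ℝ) + ((2 : ℝ) ^ θ - 1) * uniqueRep A B) :=
  stmt_8_general A B θ hθ
end

section
/- Let A, B be finite nonempty subsets of an abelian group. Then |A|·|B| ≤ 𝔄(A,B) + √((E(A,B) − 𝔄(A,B))·(|A+B| − 𝔄(A,B))), where E(A,B) is the additive energy and 𝔄(A,B) counts elements of A+B with unique representation. -/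
open scoped Pointwise

variable {G : Type*} [AddCommGroup G] [DecidableEq G]

lemma addEnergy'_eq (A B : Finset G) :
    addEnergy' A B = ∑ x ∈ A + B, repCount A B x ^ 2 := by
  have := Finset.addEnergy_eq_sum_sq' A B
  simpa [addEnergy', repCount, Finset.addEnergy] using this

theorem stmt_9 (A B : Finset G) (hA : A.Nonempty) (hB : B.Nonempty) :
    (A.card : ℝ) * B.card ≤ (uniqueRep A B : ℝ) +
      Real.sqrt (((addEnergy' A B : ℝ) - uniqueRep A B) *
        (((A + B).card : ℝ) - uniqueRep A B)) := by
  classical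
  set S := A + B with hS
  set U := S.filter (fun x => repCount A B x = 1) with hU
  set T := S.filter (fun x => ¬ repCount A B x = 1) with hT
  have hsplit : ∀ f : G → ℝ, ∑ x ∈ S, f x = ∑ x ∈ U, f x + ∑ x ∈ T, f x := by
    intro f
    rw [hU, hT, Finset.sum_filter_add_sum_filter_not]
  have hUcard : (uniqueRep A B : ℝ) = U.card := by rfl
  have hTcard : (T.card : ℝ) = S.card - uniqueRep A B := by
    rw [hUcard, hT, Finset.filter_not, Finset.cast_card_sdiff (Finset.filter_subset _ _)]
  -- sum of repCount over S
  have h1 : ∑ x ∈ S, (repCount A B x : ℝ) = (A.card : ℝ) * B.card := by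
    rw [← Nat.cast_sum, sum_repCount]; push_cast; ring
  have h2 : ∑ x ∈ S, (repCount A B x : ℝ) ^ 2 = addEnergy' A B := by
    rw [addEnergy'_eq]; push_cast; ring
  have hUone : ∀ x ∈ U, (repCount A B x : ℝ) = 1 := by
    intro x hx
    rw [hU, Finset.mem_filter] at hx
    simp [hx.2]
  have hsumU : ∑ x ∈ U, (repCount A B x : ℝ) = U.card := by
    rw [Finset.sum_congr rfl hUone]; simp
  have hsumUsq : ∑ x ∈ U, (repCount A B x : ℝ) ^ 2 = U.card := by
    rw [Finset.sum_congr rfl (fun x hx => by rw [hUone x hx, one_pow])]; simp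
  -- energy bound on T
  have hEsq : ∑ x ∈ T, (repCount A B x : ℝ) ^ 2 = (addEnergy' A B : ℝ) - uniqueRep A B := by
    have := hsplit (fun x => (repCount A B x : ℝ) ^ 2)
    rw [h2, hsumUsq] at this
    rw [hUcard]; linarith
  have hsumT : ∑ x ∈ T, (repCount A B x : ℝ) = (A.card : ℝ) * B.card - uniqueRep A B := by
    have := hsplit (fun x => (repCount A B x : ℝ))
    rw [h1, hsumU] at this
    rw [hUcard]; linarith
  -- Cauchy-Schwarz
  have hCS : (∑ x ∈ T, (repCount A B x : ℝ)) ^ 2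
      ≤ (T.card : ℝ) * ∑ x ∈ T, (repCount A B x : ℝ) ^ 2 :=
    sq_sum_le_card_mul_sum_sq
  have hnn : (0:ℝ) ≤ ∑ x ∈ T, (repCount A B x : ℝ) :=
    Finset.sum_nonneg fun x _ => by positivity
  have key : ∑ x ∈ T, (repCount A B x : ℝ)
      ≤ Real.sqrt (((addEnergy' A B : ℝ) - uniqueRep A B) * ((S.card : ℝ) - uniqueRep A B)) := by
    rw [← Real.sqrt_sq hnn]
    apply Real.sqrt_le_sqrt
    calc (∑ x ∈ T, (repCount A B x : ℝ)) ^ 2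
        ≤ (T.card : ℝ) * ∑ x ∈ T, (repCount A B x : ℝ) ^ 2 := hCS
      _ = ((addEnergy' A B : ℝ) - uniqueRep A B) * ((S.card : ℝ) - uniqueRep A B) := by
          rw [hEsq, hTcard]; ring
  linarith [hsumT ▸ key]
end
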